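/- Let d ≥ 1, δ ≥ 0, 1 < p⁻ ≤ p⁺ < ∞ and s > 1. There exists a constant c > 0, depending only on d, p⁻, p⁺, δ and s, such that for all exponents p₁, p₂ ∈ [p⁻, p⁺] with |p₁ − p₂| ≤ (s−1)p⁻/4, and every matrix A ∈ ℝ^{d×d}: |F_{p₁}(A) − F_{p₂}(A)|² ≤ c |p₁ − p₂|² (1 + |A|^{p₁ s}). -/
import Mathlib


open MeasureTheory

/-- The symmetric part `A^sym := ½(A + Aᵀ)`. -/
noncomputable def msym {d : ℕ} (A : Matrix (Fin d) (Fin d) ℝ) : Matrix (Fin d) (Fin d) ℝ :=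
  (2 : ℝ)⁻¹ • (A + A.transpose)

/-- The Frobenius norm of a matrix. -/
noncomputable def frob {d : ℕ} (A : Matrix (Fin d) (Fin d) ℝ) : ℝ :=
  Real.sqrt (∑ i, ∑ j, (A i j) ^ 2)

/-- `F_p(A) := (δ+|A^sym|)^{(p−2)/2} A^sym`. -/
noncomputable def Fmap {d : ℕ} (δ p : ℝ) (A : Matrix (Fin d) (Fin d) ℝ) :
    Matrix (Fin d) (Fin d) ℝ :=
  ((δ + frob (msym A)) ^ ((p - 2) / 2)) • msym A

lemma frob_nonneg {d : ℕ} (A : Matrix (Fin d) (Fin d) ℝ) : 0 ≤ frob A := Real.sqrt_nonneg _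

lemma frob_smul {d : ℕ} (c : ℝ) (A : Matrix (Fin d) (Fin d) ℝ) :
    frob (c • A) = |c| * frob A := by
  unfold frob
  have h : ∀ i j, ((c • A) i j) ^ 2 = c ^ 2 * (A i j) ^ 2 := by
    intro i j; simp [Matrix.smul_apply, mul_pow]
  simp only [h, ← Finset.mul_sum]
  rw [Real.sqrt_mul (sq_nonneg c), Real.sqrt_sq_eq_abs]

lemma frob_eq_norm {d : ℕ} (A : Matrix (Fin d) (Fin d) ℝ) :
    frob A = ‖((WithLp.equiv 2 (Fin d × Fin d → ℝ)).symm (fun p => A p.1 p.2))‖ := by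
  rw [EuclideanSpace.norm_eq]
  simp [frob, Fintype.sum_prod_type, Real.norm_eq_abs, sq_abs]

lemma frob_add_le {d : ℕ} (A B : Matrix (Fin d) (Fin d) ℝ) :
    frob (A + B) ≤ frob A + frob B := by
  rw [frob_eq_norm, frob_eq_norm, frob_eq_norm]
  have h : ((WithLp.equiv 2 (Fin d × Fin d → ℝ)).symm (fun p => (A + B) p.1 p.2))
      = ((WithLp.equiv 2 (Fin d × Fin d → ℝ)).symm (fun p => A p.1 p.2))
        + ((WithLp.equiv 2 (Fin d × Fin d → ℝ)).symm (fun p => B p.1 p.2)) := rfl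
  rw [h]
  exact norm_add_le _ _

lemma frob_transpose {d : ℕ} (A : Matrix (Fin d) (Fin d) ℝ) : frob A.transpose = frob A := by
  unfold frob
  simp only [Matrix.transpose_apply]
  rw [Finset.sum_comm]

lemma frob_msym_le {d : ℕ} (A : Matrix (Fin d) (Fin d) ℝ) : frob (msym A) ≤ frob A := by
  unfold msym
  rw [frob_smul]
  have h := frob_add_le A A.transpose
  rw [frob_transpose] at h
  rw [abs_of_pos (by norm_num : (0:ℝ) < (2:ℝ)⁻¹)]
  linarith

lemma abs_exp_sub_exp_le (x y : ℝ) :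
    |Real.exp x - Real.exp y| ≤ |x - y| * (Real.exp x + Real.exp y) := by
  wlog h : y ≤ x with H
  · have := H y x (le_of_not_ge h)
    rw [abs_sub_comm (Real.exp x), abs_sub_comm x y]
    linarith [this]
  have h1 : 1 + (y - x) ≤ Real.exp (y - x) := by linarith [Real.add_one_le_exp (y - x)]
  have h2 : Real.exp x * (1 + (y - x)) ≤ Real.exp x * Real.exp (y - x) :=
    mul_le_mul_of_nonneg_left h1 (Real.exp_pos x).le
  rw [← Real.exp_add] at h2
  have h3 : x + (y - x) = y := by ring
  rw [h3] at h2
  have h4 : Real.exp x - Real.exp y ≤ (x - y) * Real.exp x := by nlinarith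
  have h5 : 0 ≤ Real.exp x - Real.exp y := by
    have := Real.exp_le_exp.2 h; linarith
  rw [abs_of_nonneg h5, abs_of_nonneg (by linarith : (0:ℝ) ≤ x - y)]
  nlinarith [Real.exp_pos x, Real.exp_pos y]

lemma sq_log_mul_rpow_le {t b ε : ℝ} (ht : 0 < t) (hb : 0 < b) (hε : 0 < ε) :
    (Real.log t) ^ 2 * t ^ b ≤ 4 / b ^ 2 + (1 / ε ^ 2) * t ^ (b + 2 * ε) := by
  have htb : (0:ℝ) < t ^ b := Real.rpow_pos_of_pos ht b
  rcases le_or_gt t 1 with h | h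
  · -- small t
    have hti : 0 < t⁻¹ := inv_pos.2 ht
    have h0 : -Real.log t = Real.log t⁻¹ := (Real.log_inv t).symm
    have h2 : Real.log t⁻¹ ≤ (t⁻¹) ^ (b / 2) / (b / 2) :=
      Real.log_le_rpow_div hti.le (by linarith)
    have h2' : -Real.log t ≤ (t⁻¹) ^ (b / 2) * (2 / b) := by
      rw [h0]
      calc Real.log t⁻¹ ≤ (t⁻¹) ^ (b / 2) / (b / 2) := h2
        _ = (t⁻¹) ^ (b / 2) * (2 / b) := by field_simp
    have hpos : (0:ℝ) ≤ (t⁻¹) ^ (b / 2) * (2 / b) := by positivity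
    have hsq : (Real.log t) ^ 2 ≤ ((t⁻¹) ^ (b / 2)) ^ 2 * (2 / b) ^ 2 := by
      have := sq_le_sq' (by linarith : -((t⁻¹) ^ (b / 2) * (2 / b)) ≤ Real.log t)
        (by nlinarith [h2', Real.log_nonpos ht.le h] : Real.log t ≤ (t⁻¹) ^ (b / 2) * (2 / b))
      calc (Real.log t) ^ 2 ≤ ((t⁻¹) ^ (b / 2) * (2 / b)) ^ 2 := this
        _ = ((t⁻¹) ^ (b / 2)) ^ 2 * (2 / b) ^ 2 := by ring
    have hinv : ((t⁻¹) ^ (b / 2)) ^ 2 * t ^ b = 1 := by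
      rw [Real.inv_rpow ht.le, sq, ← mul_inv, ← Real.rpow_add ht]
      have : b / 2 + b / 2 = b := by ring
      rw [this, inv_mul_cancel₀ (ne_of_gt htb)]
    have : (Real.log t) ^ 2 * t ^ b ≤ (2 / b) ^ 2 := by
      calc (Real.log t) ^ 2 * t ^ b ≤ ((t⁻¹) ^ (b / 2)) ^ 2 * (2 / b) ^ 2 * t ^ b :=
            mul_le_mul_of_nonneg_right hsq htb.le
        _ = ((t⁻¹) ^ (b / 2)) ^ 2 * t ^ b * (2 / b) ^ 2 := by ring
        _ = (2 / b) ^ 2 := by rw [hinv]; ring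
    have h4 : (2 / b) ^ 2 = 4 / b ^ 2 := by ring
    have hr : 0 ≤ (1 / ε ^ 2) * t ^ (b + 2 * ε) := by positivity
    linarith
  · -- large t
    have hlog : 0 ≤ Real.log t := Real.log_nonneg h.le
    have h2 : Real.log t ≤ t ^ ε / ε := Real.log_le_rpow_div (by linarith) hε
    have hsq : (Real.log t) ^ 2 ≤ (t ^ ε) ^ 2 * (1 / ε ^ 2) := by
      have := mul_self_le_mul_self hlog h2
      calc (Real.log t) ^ 2 = Real.log t * Real.log t := sq (Real.log t) ▸ by ring
        _ ≤ (t ^ ε / ε) * (t ^ ε / ε) := this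
        _ = (t ^ ε) ^ 2 * (1 / ε ^ 2) := by field_simp
    have hte : (t ^ ε) ^ 2 * t ^ b = t ^ (b + 2 * ε) := by
      rw [sq, ← Real.rpow_add ht, ← Real.rpow_add ht]
      ring_nf
    have : (Real.log t) ^ 2 * t ^ b ≤ (1 / ε ^ 2) * t ^ (b + 2 * ε) := by
      calc (Real.log t) ^ 2 * t ^ b ≤ (t ^ ε) ^ 2 * (1 / ε ^ 2) * t ^ b :=
            mul_le_mul_of_nonneg_right hsq htb.le
        _ = (1 / ε ^ 2) * ((t ^ ε) ^ 2 * t ^ b) := by ring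
        _ = (1 / ε ^ 2) * t ^ (b + 2 * ε) := by rw [hte]
    have : (0:ℝ) ≤ 4 / b ^ 2 := by positivity
    linarith

lemma rpow_le_one_add {x q Q : ℝ} (hx : 0 ≤ x) (hq : 0 ≤ q) (hQ : q ≤ Q) :
    x ^ q ≤ 1 + x ^ Q := by
  rcases le_or_gt x 1 with h | h
  · have h1 := Real.rpow_le_one hx h hq
    have h2 := Real.rpow_nonneg hx Q
    linarith
  · have h1 := Real.rpow_le_rpow_of_exponent_le h.le hQ
    linarith

lemma add_rpow_le {x y P : ℝ} (hx : 0 ≤ x) (hy : 0 ≤ y) (hP : 0 ≤ P) :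
    (x + y) ^ P ≤ 2 ^ P * (x ^ P + y ^ P) := by
  have hmax : x + y ≤ 2 * max x y := by
    rcases le_total x y with h | h
    · rw [max_eq_right h]; linarith
    · rw [max_eq_left h]; linarith
  have hm0 : 0 ≤ max x y := le_max_of_le_left hx
  calc (x + y) ^ P ≤ (2 * max x y) ^ P :=
        Real.rpow_le_rpow (by linarith) hmax hP
    _ = 2 ^ P * (max x y) ^ P := Real.mul_rpow (by norm_num) hm0
    _ ≤ 2 ^ P * (x ^ P + y ^ P) := by
        have h2 : (0:ℝ) ≤ 2 ^ P := Real.rpow_nonneg (by norm_num) P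
        apply mul_le_mul_of_nonneg_left _ h2
        rcases le_total x y with h | h
        · rw [max_eq_right h]; linarith [Real.rpow_nonneg hx P]
        · rw [max_eq_left h]; linarith [Real.rpow_nonneg hy P]

lemma Fmap_sub_frob {d : ℕ} (δ p₁ p₂ : ℝ) (A : Matrix (Fin d) (Fin d) ℝ) :
    frob (Fmap δ p₁ A - Fmap δ p₂ A) =
      |((δ + frob (msym A)) ^ ((p₁ - 2) / 2)) - ((δ + frob (msym A)) ^ ((p₂ - 2) / 2))|
        * frob (msym A) := by
  unfold Fmap
  rw [← sub_smul, frob_smul]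

set_option maxHeartbeats 1000000 in
lemma key_ineq (δ pm pp s ε p₁ p₂ m fA : ℝ) (hδ : 0 ≤ δ) (hpm : 1 < pm)
    (hs : 1 < s) (hε : 0 < ε) (hε4 : 4 * ε ≤ (s - 1) * pm)
    (h1 : pm ≤ p₁) (h3 : pm ≤ p₂) (h2 : p₁ ≤ pp) (h4 : p₂ ≤ pp)
    (hpp12 : |p₁ - p₂| ≤ ε) (hm0 : 0 ≤ m) (hmA : m ≤ fA) :
    (|(δ + m) ^ ((p₁ - 2) / 2) - (δ + m) ^ ((p₂ - 2) / 2)| * m) ^ 2 ≤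
      (4 / pm ^ 2 + 1 / ε ^ 2 * (1 + 2 ^ (pp * s) * (2 + δ ^ (pp * s)))) *
        |p₁ - p₂| ^ 2 * (1 + fA ^ (p₁ * s)) := by
  have hfA0 : 0 ≤ fA := le_trans hm0 hmA
  have hs1 : 0 < s - 1 := by linarith
  have hpm0 : 0 < pm := by linarith
  have hp₁0 : 0 < p₁ := by linarith
  have h2P : (0:ℝ) < 2 ^ (pp * s) := Real.rpow_pos_of_pos (by norm_num) _
  have hδPP : (0:ℝ) ≤ δ ^ (pp * s) := Real.rpow_nonneg hδ _
  obtain ⟨P, hPdef⟩ : ∃ P : ℝ, P = p₁ * s := ⟨_, rfl⟩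
  rw [← hPdef]
  have hP0 : 0 ≤ P := by rw [hPdef]; positivity
  have hPle : P ≤ pp * s := by
    rw [hPdef]; exact mul_le_mul_of_nonneg_right h2 (by linarith)
  obtain ⟨K, hKdef⟩ : ∃ K : ℝ, K = 1 + 2 ^ (pp * s) * (2 + δ ^ (pp * s)) := ⟨_, rfl⟩
  rw [← hKdef]
  have hK0 : 0 < K := by
    rw [hKdef]
    have := mul_pos h2P (show (0:ℝ) < 2 + δ ^ (pp * s) by linarith)
    linarith
  have hfAP : 0 ≤ fA ^ P := Real.rpow_nonneg hfA0 _
  have hC0 : 0 ≤ 4 / pm ^ 2 + 1 / ε ^ 2 * K := by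
    have : (0:ℝ) ≤ 4 / pm ^ 2 := by positivity
    have : (0:ℝ) ≤ 1 / ε ^ 2 * K := mul_nonneg (by positivity) hK0.le
    linarith
  obtain ⟨t, htdef⟩ : ∃ t : ℝ, t = δ + m := ⟨_, rfl⟩
  rw [← htdef]
  have hmt : m ≤ t := by rw [htdef]; linarith
  rcases eq_or_lt_of_le hm0 with hm' | hm'
  · rw [← hm', mul_zero]
    rw [show ((0:ℝ)) ^ 2 = 0 by norm_num]
    exact mul_nonneg (mul_nonneg hC0 (sq_nonneg _)) (by linarith)
  · have ht : 0 < t := by rw [htdef]; linarith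
    obtain ⟨x₁, hx1d⟩ : ∃ x : ℝ, x = t ^ ((p₁ - 2) / 2) := ⟨_, rfl⟩
    obtain ⟨x₂, hx2d⟩ : ∃ x : ℝ, x = t ^ ((p₂ - 2) / 2) := ⟨_, rfl⟩
    rw [← hx1d, ← hx2d]
    -- mean value bound
    have he₁ : x₁ = Real.exp (Real.log t * ((p₁ - 2) / 2)) := by
      rw [hx1d]; exact Real.rpow_def_of_pos ht _
    have he₂ : x₂ = Real.exp (Real.log t * ((p₂ - 2) / 2)) := by
      rw [hx2d]; exact Real.rpow_def_of_pos ht _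
    have hB : |x₁ - x₂| ≤ |p₁ - p₂| / 2 * (|Real.log t| * (x₁ + x₂)) := by
      rw [he₁, he₂]
      have h := abs_exp_sub_exp_le (Real.log t * ((p₁ - 2) / 2)) (Real.log t * ((p₂ - 2) / 2))
      have heq : |Real.log t * ((p₁ - 2) / 2) - Real.log t * ((p₂ - 2) / 2)|
          = |Real.log t| * (|p₁ - p₂| / 2) := by
        rw [← mul_sub, abs_mul]
        congr 1
        rw [show (p₁ - 2) / 2 - (p₂ - 2) / 2 = (p₁ - p₂) / 2 by ring, abs_div]
        norm_num
      rw [heq] at h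
      linarith only [h]
    -- x_i^2 * m^2 ≤ t ^ p_i
    have hsq : ∀ p : ℝ, (t ^ ((p - 2) / 2)) ^ 2 * m ^ 2 ≤ t ^ p := by
      intro p
      have ha : (t ^ ((p - 2) / 2)) ^ 2 = t ^ (p - 2) := by
        rw [sq, ← Real.rpow_add ht]; norm_num
      have hb : m ^ 2 ≤ t ^ 2 := pow_le_pow_left₀ hm0 hmt 2
      have hc : t ^ (p - 2) * t ^ 2 = t ^ p := by
        rw [← Real.rpow_natCast t 2, ← Real.rpow_add ht]; norm_num
      calc (t ^ ((p - 2) / 2)) ^ 2 * m ^ 2 = t ^ (p - 2) * m ^ 2 := by rw [ha]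
        _ ≤ t ^ (p - 2) * t ^ 2 := mul_le_mul_of_nonneg_left hb (Real.rpow_nonneg ht.le _)
        _ = t ^ p := hc
    have hx1m : x₁ ^ 2 * m ^ 2 ≤ t ^ p₁ := by rw [hx1d]; exact hsq p₁
    have hx2m : x₂ ^ 2 * m ^ 2 ≤ t ^ p₂ := by rw [hx2d]; exact hsq p₂
    -- log bound
    have hD : ∀ p : ℝ, pm ≤ p → p + 2 * ε ≤ P →
        Real.log t ^ 2 * t ^ p ≤ (4 / pm ^ 2 + 1 / ε ^ 2 * K) * (1 + fA ^ P) := by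
      intro p hp hqle
      have hl := sq_log_mul_rpow_le ht (show 0 < p by linarith) hε
      have hpm2 : 4 / p ^ 2 ≤ 4 / pm ^ 2 := by
        apply div_le_div_of_nonneg_left (by norm_num) (by positivity)
        exact pow_le_pow_left₀ hpm0.le hp 2
      have hKb : t ^ (p + 2 * ε) ≤ K * (1 + fA ^ P) := by
        have ha := rpow_le_one_add ht.le (show 0 ≤ p + 2 * ε by linarith) hqle
        have hb : t ^ P ≤ (δ + fA) ^ P :=
          Real.rpow_le_rpow ht.le (by rw [htdef]; linarith) hP0
        have hcc : (δ + fA) ^ P ≤ 2 ^ P * (δ ^ P + fA ^ P) := add_rpow_le hδ hfA0 hP0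
        have hd2 : (2:ℝ) ^ P ≤ 2 ^ (pp * s) :=
          Real.rpow_le_rpow_of_exponent_le (by norm_num) hPle
        have he : δ ^ P ≤ 1 + δ ^ (pp * s) := rpow_le_one_add hδ hP0 hPle
        have h2p0 : (0:ℝ) ≤ 2 ^ P := Real.rpow_nonneg (by norm_num) P
        have hδP0 : (0:ℝ) ≤ δ ^ P := Real.rpow_nonneg hδ P
        have hmm : 2 ^ P * (δ ^ P + fA ^ P) ≤ 2 ^ (pp * s) * ((1 + δ ^ (pp * s)) + fA ^ P) :=
          mul_le_mul hd2 (by linarith) (by linarith) h2P.le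
        have hfin : 1 + 2 ^ (pp * s) * ((1 + δ ^ (pp * s)) + fA ^ P) ≤ K * (1 + fA ^ P) := by
          rw [hKdef]
          linarith only [hfAP, h2P.le, mul_nonneg h2P.le hfAP,
            mul_nonneg (mul_nonneg h2P.le hδPP) hfAP]
        linarith
      have h5 : 1 / ε ^ 2 * t ^ (p + 2 * ε) ≤ 1 / ε ^ 2 * (K * (1 + fA ^ P)) :=
        mul_le_mul_of_nonneg_left hKb (by positivity)
      have h6 : (0:ℝ) ≤ 4 / pm ^ 2 := by positivity
      linarith only [hl, hpm2, h5, mul_nonneg h6 hfAP]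
    have habs := abs_le.mp hpp12
    have hq1 : p₁ + 2 * ε ≤ P := by
      rw [hPdef]
      linarith only [mul_nonneg (by linarith : (0:ℝ) ≤ p₁ - pm) hs1.le, hε4, hε.le]
    have hq2 : p₂ + 2 * ε ≤ P := by
      rw [hPdef]
      linarith only [mul_nonneg (by linarith : (0:ℝ) ≤ p₁ - pm) hs1.le, hε4, hε.le, habs.1]
    have hD₁ := hD p₁ h1 hq1
    have hD₂ := hD p₂ h3 hq2
    -- assembly
    have e1 : (|x₁ - x₂| * m) ^ 2 = (x₁ - x₂) ^ 2 * m ^ 2 := by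
      rw [mul_pow, sq_abs]
    have hBsq := mul_self_le_mul_self (abs_nonneg (x₁ - x₂)) hB
    have h2' : (x₁ - x₂) ^ 2 ≤ (p₁ - p₂) ^ 2 / 4 * Real.log t ^ 2 * (x₁ + x₂) ^ 2 := by
      calc (x₁ - x₂) ^ 2 = |x₁ - x₂| * |x₁ - x₂| := by rw [← sq_abs (x₁ - x₂), sq]
        _ ≤ (|p₁ - p₂| / 2 * (|Real.log t| * (x₁ + x₂))) *
              (|p₁ - p₂| / 2 * (|Real.log t| * (x₁ + x₂))) := hBsq
        _ = |p₁ - p₂| ^ 2 / 4 * |Real.log t| ^ 2 * (x₁ + x₂) ^ 2 := by ring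
        _ = (p₁ - p₂) ^ 2 / 4 * Real.log t ^ 2 * (x₁ + x₂) ^ 2 := by
            rw [sq_abs, sq_abs]
    have h3' : (x₁ + x₂) ^ 2 * m ^ 2 ≤ 2 * (t ^ p₁ + t ^ p₂) := by
      linarith only [sq_nonneg ((x₁ - x₂) * m), hx1m, hx2m]
    have h4' := mul_le_mul_of_nonneg_right h2' (sq_nonneg m)
    have h5' := mul_le_mul_of_nonneg_left h3'
      (show (0:ℝ) ≤ (p₁ - p₂) ^ 2 / 4 * Real.log t ^ 2 by positivity)
    have h6' : (x₁ - x₂) ^ 2 * m ^ 2 ≤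
        (p₁ - p₂) ^ 2 / 2 * (Real.log t ^ 2 * t ^ p₁ + Real.log t ^ 2 * t ^ p₂) := by
      linarith only [h4', h5']
    have h7' := mul_le_mul_of_nonneg_left (add_le_add hD₁ hD₂)
      (show (0:ℝ) ≤ (p₁ - p₂) ^ 2 / 2 by positivity)
    rw [e1, show |p₁ - p₂| ^ 2 = (p₁ - p₂) ^ 2 from sq_abs _]
    linarith only [h6', h7']


set_option maxHeartbeats 1000000 in
theorem stmt13 (d : ℕ) (hd : 1 ≤ d) (δ pm pp s : ℝ) (hδ : 0 ≤ δ) (hpm : 1 < pm)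
    (hpmpp : pm ≤ pp) (hs : 1 < s) :
    ∃ c : ℝ, 0 < c ∧ ∀ p₁ p₂ : ℝ, pm ≤ p₁ → p₁ ≤ pp → pm ≤ p₂ → p₂ ≤ pp →
      |p₁ - p₂| ≤ (s - 1) * pm / 4 →
      ∀ A : Matrix (Fin d) (Fin d) ℝ,
        frob (Fmap δ p₁ A - Fmap δ p₂ A) ^ 2 ≤
          c * |p₁ - p₂| ^ 2 * (1 + frob A ^ (p₁ * s)) := by
  have hpm0 : 0 < pm := by linarith
  have hs1 : 0 < s - 1 := by linarith
  have hε : 0 < (s - 1) * pm / 4 := by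
    have := mul_pos hs1 hpm0; linarith
  have h2P : (0:ℝ) < 2 ^ (pp * s) := Real.rpow_pos_of_pos (by norm_num) _
  have hδPP : (0:ℝ) ≤ δ ^ (pp * s) := Real.rpow_nonneg hδ _
  refine ⟨4 / pm ^ 2 + 1 / ((s - 1) * pm / 4) ^ 2 * (1 + 2 ^ (pp * s) * (2 + δ ^ (pp * s))),
    ?_, ?_⟩
  · have hc1 : (0:ℝ) < 4 / pm ^ 2 := div_pos (by norm_num) (pow_pos hpm0 2)
    have hc2 : (0:ℝ) ≤ 1 / ((s - 1) * pm / 4) ^ 2 * (1 + 2 ^ (pp * s) * (2 + δ ^ (pp * s))) :=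
      mul_nonneg (by positivity)
        (by linarith only [h2P.le, hδPP, mul_nonneg h2P.le (by linarith only [hδPP] : (0:ℝ) ≤ 2 + δ ^ (pp * s))])
    linarith
  · intro p₁ p₂ h1 h2 h3 h4 hpp12 A
    rw [Fmap_sub_frob]
    exact key_ineq δ pm pp s ((s - 1) * pm / 4) p₁ p₂ (frob (msym A)) (frob A)
      hδ hpm hs hε (by linarith) h1 h3 h2 h4 hpp12 (frob_nonneg _) (frob_msym_le A)
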